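/- Positivity of the right intermediate state in the Rusanov positivity proof: let γ > 1, let (ρ, v, p) be a primitive state with ρ > 0 and p > 0, with conserved vector U, Euler flux F(U) and sound speed c = √(γp/ρ), and let λ, w ∈ ℝ satisfy (λ + w) − v ≥ c. Then the vector C = (λ + w)·U − F(U) = (ρ_C, m_C, E_C) satisfies ρ_C ≥ ρc > 0 and (γ−1)(E_C − m_C²/(2ρ_C)) > 0, i.e. C has positive density and positive pressure. -/

import Mathlib

/-! With `d = λ + w − v ≥ c`, the state `C` has density `ρ d` and pressure
`p d − (γ − 1) p² / (2 ρ d)`; the latter is positive because `ρ d² ≥ ρ c² = γ p > (γ − 1) p / 2`. -/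

noncomputable section

/-- Conserved vector `U = (ρ, ρv, E)` of a primitive state `(ρ, v, p)`,
with `E = p/(γ-1) + ρ v²/2`. -/
def consU (γ ρ v p : ℝ) : ℝ × ℝ × ℝ := (ρ, ρ * v, p / (γ - 1) + ρ * v ^ 2 / 2)

/-- Euler flux `F(U) = (ρv, p + ρv², (E+p)v)`. -/
def eulerFlux (γ ρ v p : ℝ) : ℝ × ℝ × ℝ :=
  (ρ * v, p + ρ * v ^ 2, (p / (γ - 1) + ρ * v ^ 2 / 2 + p) * v)

/-- Sound speed `c = √(γ p / ρ)`. -/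
def soundSpeed (γ ρ p : ℝ) : ℝ := Real.sqrt (γ * p / ρ)

/-- Pressure `(γ−1)(E − m²/(2ρ))` of a conserved vector `(ρ, m, E)`. -/
def pressureOf (γ : ℝ) (u : ℝ × ℝ × ℝ) : ℝ := (γ - 1) * (u.2.2 - u.2.1 ^ 2 / (2 * u.1))

theorem smul_consU_sub_eulerFlux (γ ρ v p s : ℝ) :
    s • consU γ ρ v p - eulerFlux γ ρ v p =
      (ρ * (s - v), ρ * v * (s - v) - p, (p / (γ - 1) + ρ * v ^ 2 / 2) * (s - v) - p * v) := by
  simp only [consU, eulerFlux, Prod.smul_mk, smul_eq_mul, Prod.mk_sub_mk]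
  refine Prod.ext ?_ (Prod.ext ?_ ?_) <;> dsimp only <;> ring

/-- The kinetic-energy terms cancel. -/
theorem pressureOf_smul_consU_sub_eulerFlux {γ ρ v p s : ℝ} (hγ : γ ≠ 1) (hρ : ρ ≠ 0)
    (hd : s - v ≠ 0) :
    pressureOf γ (s • consU γ ρ v p - eulerFlux γ ρ v p) =
      p * (s - v) - (γ - 1) * p ^ 2 / (2 * (ρ * (s - v))) := by
  have hγ' : γ - 1 ≠ 0 := sub_ne_zero.mpr hγ
  rw [smul_consU_sub_eulerFlux, pressureOf]
  field_simp
  ring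

theorem pressureOf_smul_consU_sub_eulerFlux_pos {γ ρ v p s : ℝ} (hγ : 1 < γ) (hρ : 0 < ρ)
    (hp : 0 < p) (hd : 0 < s - v) (hspeed : (γ - 1) * p < 2 * ρ * (s - v) ^ 2) :
    0 < pressureOf γ (s • consU γ ρ v p - eulerFlux γ ρ v p) := by
  rw [pressureOf_smul_consU_sub_eulerFlux hγ.ne' hρ.ne' hd.ne', sub_pos,
    div_lt_iff₀ (by positivity)]
  nlinarith

theorem soundSpeed_pos {γ ρ p : ℝ} (hγ : 0 < γ) (hρ : 0 < ρ) (hp : 0 < p) :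
    0 < soundSpeed γ ρ p :=
  Real.sqrt_pos.mpr (by positivity)

theorem mul_soundSpeed_sq {γ ρ p : ℝ} (hρ : 0 < ρ) (hγp : 0 ≤ γ * p) :
    ρ * soundSpeed γ ρ p ^ 2 = γ * p := by
  rw [soundSpeed, Real.sq_sqrt (div_nonneg hγp hρ.le), mul_div_cancel₀ _ hρ.ne']

/-- Positivity of the right intermediate state `C = (λ + w)·U − F(U)` in the
Rusanov positivity proof: `ρ_C ≥ ρ c > 0` and `C` has positive pressure. -/
theorem right_intermediate_state_positivity
    (γ : ℝ) (hγ : 1 < γ) (ρ v p : ℝ) (hρ : 0 < ρ) (hp : 0 < p)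
    (lam w : ℝ) (hsig : (lam + w) - v ≥ soundSpeed γ ρ p)
    (C : ℝ × ℝ × ℝ) (hC : C = (lam + w) • consU γ ρ v p - eulerFlux γ ρ v p) :
    C.1 ≥ ρ * soundSpeed γ ρ p ∧ 0 < ρ * soundSpeed γ ρ p ∧ 0 < pressureOf γ C := by
  have hc : 0 < soundSpeed γ ρ p := soundSpeed_pos (by linarith) hρ hp
  have hcd : soundSpeed γ ρ p ^ 2 ≤ (lam + w - v) ^ 2 := pow_le_pow_left₀ hc.le hsig 2
  have hρc2 : ρ * soundSpeed γ ρ p ^ 2 = γ * p := mul_soundSpeed_sq hρ (by positivity)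
  refine ⟨?_, mul_pos hρ hc, ?_⟩
  · rw [hC, smul_consU_sub_eulerFlux]
    exact mul_le_mul_of_nonneg_left hsig hρ.le
  · rw [hC]
    refine pressureOf_smul_consU_sub_eulerFlux_pos hγ hρ hp (hc.trans_le hsig) ?_
    nlinarith [mul_le_mul_of_nonneg_left hcd hρ.le]
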